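/- arXiv:1010.4321 — 6 statements merged into one kernel-verified Lean document; each statement's English description precedes it below -/
import Mathlib

section
/- If a graph G has chromatic number 5 and cl is a proper 5-coloring of G minimizing (lexicographically) the frequency vector of color usage, and v is a vertex colored 5, then the graph obtained by deleting all color-5 vertices except v still has chromatic number 5. -/
/-!
Suppose the induced graph were 4-colorable. Keep color 5 on the color-5 vertices other than `v`
(an independent set) and use the 4-coloring everywhere else. This is a proper 5-coloring of `G`
in which color 5 is used one time fewer (at `v`), so its frequency vector is lexicographically
smaller, contradicting the minimality of `C`.
-/

open SimpleGraph Finset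

/-- The frequency vector of a proper coloring, listing how many vertices receive each
color, from color 5 (index 4) down to color 1 (index 0). -/
noncomputable def freqVector {V : Type*} [Fintype V] (G : SimpleGraph V)
    (C : G.Coloring (Fin 5)) : List ℕ :=
  (([4, 3, 2, 1, 0] : List (Fin 5)).map fun i =>
    (Finset.univ.filter fun v => C v = i).card)

namespace SimpleGraph

variable {V : Type*} {G : SimpleGraph V} {n : ℕ}

noncomputable def Coloring.extendLast (t : Set V) (hindep : G.IsIndepSet tᶜ)
    (D : (G.induce t).Coloring (Fin n)) : G.Coloring (Fin (n + 1)) :=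
  open Classical in
  Coloring.mk (fun u => if hu : u ∈ t then (D ⟨u, hu⟩).castSucc else Fin.last n) <| by
    intro a b hab
    by_cases ha : a ∈ t <;> by_cases hb : b ∈ t <;>
      simp only [ha, hb, dif_pos, dif_neg, not_false_eq_true, ne_eq]
    · exact fun h => D.valid (v := ⟨a, ha⟩) (w := ⟨b, hb⟩) hab (Fin.castSucc_injective n h)
    · exact (Fin.castSucc_lt_last _).ne
    · exact (Fin.castSucc_lt_last _).ne'
    · exact (hindep ha hb hab.ne hab).elim

theorem Coloring.extendLast_eq_last_iff (t : Set V) (hindep : G.IsIndepSet tᶜ)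
    (D : (G.induce t).Coloring (Fin n)) (u : V) :
    extendLast t hindep D u = Fin.last n ↔ u ∉ t := by
  by_cases hu : u ∈ t <;> simp [extendLast, Coloring.mk, hu, (Fin.castSucc_lt_last _).ne]

theorem exists_coloring_card_last_lt [Fintype V] (C : G.Coloring (Fin (n + 1))) {v : V}
    (hv : C v = Fin.last n) (hcol : (G.induce {u | C u = Fin.last n → u = v}).Colorable n) :
    ∃ C' : G.Coloring (Fin (n + 1)), #{u | C' u = Fin.last n} < #{u | C u = Fin.last n} := by
  set t : Set V := {u | C u = Fin.last n → u = v}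
  have hindep : G.IsIndepSet tᶜ := by
    intro a ha b hb _ hab
    simp only [t, Set.mem_compl_iff, Set.mem_ofPred_eq, Classical.not_imp] at ha hb
    exact C.valid hab (ha.1.trans hb.1.symm)
  refine ⟨Coloring.extendLast t hindep hcol.some, card_lt_card ?_⟩
  refine (ssubset_iff_of_subset fun u hu => ?_).2
    ⟨v, by simp [hv], by simp [Coloring.extendLast_eq_last_iff, t]⟩
  simp only [mem_filter, mem_univ, true_and, Coloring.extendLast_eq_last_iff, t,
    Set.mem_ofPred_eq, Classical.not_imp] at hu ⊢
  exact hu.1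

end SimpleGraph

theorem freqVector_lex_of_card_top_lt {V : Type*} [Fintype V] {G : SimpleGraph V}
    {C C' : G.Coloring (Fin 5)} (h : #{u | C' u = 4} < #{u | C u = 4}) :
    List.Lex (· < ·) (freqVector G C') (freqVector G C) :=
  List.Lex.rel h

theorem chromatic_five_after_deleting_top_color_class_except_one_general
    {V : Type*} [Fintype V] (G : SimpleGraph V)
    (C : G.Coloring (Fin 5))
    (hmin : ∀ C' : G.Coloring (Fin 5),
      ¬ List.Lex (· < ·) (freqVector G C') (freqVector G C))
    (v : V) (hv : C v = 4) :
    (G.induce {u : V | C u = 4 → u = v}).chromaticNumber = 5 := by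
  refine (chromaticNumber_eq_iff_colorable_not_colorable (n := 4)).2 ⟨?_, fun hcol => ?_⟩
  · simpa using C.colorable.of_hom (Embedding.induce _).toHom
  · obtain ⟨C', hlt⟩ := exists_coloring_card_last_lt C hv hcol
    exact hmin C' (freqVector_lex_of_card_top_lt hlt)

/-- If `G` has chromatic number 5 and `C` is a proper 5-coloring minimizing the
frequency vector lexicographically, and `v` is a vertex colored with the top color 5,
then deleting all color-5 vertices except `v` leaves a graph of chromatic number 5. -/
theorem chromatic_five_after_deleting_top_color_class_except_one
    {V : Type*} [Fintype V] (G : SimpleGraph V)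
    (hchrom : G.chromaticNumber = 5)
    (C : G.Coloring (Fin 5))
    (hmin : ∀ C' : G.Coloring (Fin 5),
      ¬ List.Lex (· < ·) (freqVector G C') (freqVector G C))
    (v : V) (hv : C v = 4) :
    (G.induce {u : V | C u = 4 → u = v}).chromaticNumber = 5 :=
  chromatic_five_after_deleting_top_color_class_except_one_general G C hmin v hv
end

section
/- Let G = (V,E) be a graph, W ⊆ V a vertex set such that the induced subgraph on W is a clique and G \ W is disconnected into parts C_l and C_r. If G_l = G[C_l ∪ W] admits a proper coloring with k_l colors and G_r = G[C_r ∪ W] admits a proper coloring with k_r colors, then G admits a proper coloring with max(k_l, k_r) colors. -/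
/-!
Colour `G[C_l ∪ W]` and `G[C_r ∪ W]` with the same `max k_l k_r` colours. Both colourings are
injective on the clique `W`, so permuting the colours of the second one makes the two agree on
`W`. Every edge of `G` lies inside `C_l ∪ W` or inside `C_r ∪ W`, and the two sides meet only
in `W`, so the two colourings glue to a proper colouring of `G`.
-/

open SimpleGraph

namespace SimpleGraph

variable {V α : Type*}

noncomputable def Coloring.glue {G : SimpleGraph V} (s t : Set V) (hcover : ∀ v, v ∈ s ∨ v ∈ t)
    (hadj : ∀ a b, G.Adj a b → (a ∈ s ∧ b ∈ s) ∨ (a ∈ t ∧ b ∈ t))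
    (cs : (G.induce s).Coloring α) (ct : (G.induce t).Coloring α)
    (hagree : ∀ v (hs : v ∈ s) (ht : v ∈ t), cs ⟨v, hs⟩ = ct ⟨v, ht⟩) : G.Coloring α := by
  classical
  let color : V → α := fun v =>
    if hs : v ∈ s then cs ⟨v, hs⟩ else ct ⟨v, (hcover v).resolve_left hs⟩
  have color_of_mem_left : ∀ v (hs : v ∈ s), color v = cs ⟨v, hs⟩ := fun v hs => dif_pos hs
  have color_of_mem_right : ∀ v (ht : v ∈ t), color v = ct ⟨v, ht⟩ := by
    intro v ht
    by_cases hs : v ∈ s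
    · exact (dif_pos hs).trans (hagree v hs ht)
    · exact dif_neg hs
  refine Coloring.mk color fun {a b} hab => ?_
  rcases hadj a b hab with ⟨ha, hb⟩ | ⟨ha, hb⟩
  · rw [color_of_mem_left a ha, color_of_mem_left b hb]
    exact cs.valid (G.induce_adj.mpr hab)
  · rw [color_of_mem_right a ha, color_of_mem_right b hb]
    exact ct.valid (G.induce_adj.mpr hab)

theorem Coloring.exists_recolor_comp_eq [Finite α] {ι W : Type*} {G : SimpleGraph V}
    {H : SimpleGraph W} (C : G.Coloring α) (D : H.Coloring α) (f : ι → V) (g : ι → W)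
    (hf : Pairwise fun i j => G.Adj (f i) (f j)) (hg : Pairwise fun i j => H.Adj (g i) (g j)) :
    ∃ D' : H.Coloring α, ∀ i, D' (g i) = C (f i) := by
  have hDg := D.injective_comp_of_pairwise_adj g hg
  have : Finite ι := .of_injective _ hDg
  obtain ⟨σ, hσ⟩ :=
    Equiv.Perm.exists_extending_pair _ _ hDg (C.injective_comp_of_pairwise_adj f hf)
  exact ⟨H.recolorOfEquiv σ D, hσ⟩

end SimpleGraph

/-- If `W` induces a clique, `Cl` and `Cr` partition the remaining vertices with no
edges between them, and `G[Cl ∪ W]` is `kl`-colorable while `G[Cr ∪ W]` is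
`kr`-colorable, then `G` is `max kl kr`-colorable. -/
theorem colorable_of_clique_cut
    {V : Type*} (G : SimpleGraph V) (W Cl Cr : Set V)
    (hclique : G.IsClique W)
    (hpart : Cl ∪ Cr = Wᶜ)
    (hdisj : Disjoint Cl Cr)
    (hsep : ∀ a ∈ Cl, ∀ b ∈ Cr, ¬ G.Adj a b)
    (kl kr : ℕ)
    (hl : (G.induce (Cl ∪ W)).Colorable kl)
    (hr : (G.induce (Cr ∪ W)).Colorable kr) :
    G.Colorable (max kl kr) := by
  obtain ⟨cl⟩ := hl.mono (le_max_left kl kr)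
  obtain ⟨cr⟩ := hr.mono (le_max_right kl kr)
  have hW : Pairwise fun v w : W => G.Adj v w := fun v w hvw =>
    hclique v.2 w.2 (Subtype.coe_ne_coe.mpr hvw)
  obtain ⟨cr', hcr'⟩ := cl.exists_recolor_comp_eq cr (fun w : W => ⟨w, Or.inr w.2⟩)
    (fun w : W => ⟨w, Or.inr w.2⟩) hW hW
  have hmem : ∀ v, v ∈ Cl ∨ v ∈ Cr ∨ v ∈ W := fun v => by
    by_cases hv : v ∈ W
    · exact Or.inr (Or.inr hv)
    · exact or_assoc.mp (Or.inl (hpart ▸ hv : v ∈ Cl ∪ Cr))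
  refine ⟨Coloring.glue (Cl ∪ W) (Cr ∪ W) (fun v => ?_) (fun a b hab => ?_) cl cr'
    (fun v hvl hvr => ?_)⟩
  · rcases hmem v with hv | hv | hv <;> simp [hv]
  · rcases hmem a with ha | ha | ha <;> rcases hmem b with hb | hb | hb <;>
      first
      | exact absurd hab (hsep a ha b hb)
      | exact absurd hab.symm (hsep b hb a ha)
      | simp [ha, hb]
  · have hvW : v ∈ W := by
      rcases hvl with hvl | hvW
      · exact hvr.resolve_left (Set.disjoint_left.mp hdisj hvl)
      · exact hvW
    exact (hcr' ⟨v, hvW⟩).symm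
end

section
/- Every graph with chromatic number at least 4 contains a K_4 minor. -/
open SimpleGraph

/-- `B` is a system of branch sets witnessing a `K_n` minor in `G`:
nonempty, connected, pairwise disjoint sets with an edge between any two of them. -/
def IsCompleteMinorWitness {V : Type*} (G : SimpleGraph V) (n : ℕ)
    (B : Fin n → Set V) : Prop :=
  (∀ i, (B i).Nonempty) ∧ (∀ i, (G.induce (B i)).Connected) ∧
  (∀ i j, i ≠ j → Disjoint (B i) (B j)) ∧
  (∀ i j, i ≠ j → ∃ u ∈ B i, ∃ v ∈ B j, G.Adj u v)

/-- `G` contains a complete minor `K_n`. -/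
def HasCompleteMinor {V : Type*} (G : SimpleGraph V) (n : ℕ) : Prop :=
  ∃ B : Fin n → Set V, IsCompleteMinorWitness G n B

/-- `A`, `B` are systems of branch sets witnessing a complete bipartite `K_{m,n}`
minor in `G`. -/
def IsBipartiteMinorWitness {V : Type*} (G : SimpleGraph V) (m n : ℕ)
    (A : Fin m → Set V) (B : Fin n → Set V) : Prop :=
  (∀ i, (A i).Nonempty) ∧ (∀ j, (B j).Nonempty) ∧
  (∀ i, (G.induce (A i)).Connected) ∧ (∀ j, (G.induce (B j)).Connected) ∧
  (∀ i j, i ≠ j → Disjoint (A i) (A j)) ∧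
  (∀ i j, i ≠ j → Disjoint (B i) (B j)) ∧
  (∀ i j, Disjoint (A i) (B j)) ∧
  (∀ i j, ∃ u ∈ A i, ∃ v ∈ B j, G.Adj u v)

/-- `G` contains a complete bipartite minor `K_{m,n}`. -/
def HasBipartiteMinor {V : Type*} (G : SimpleGraph V) (m n : ℕ) : Prop :=
  ∃ (A : Fin m → Set V) (B : Fin n → Set V), IsBipartiteMinorWitness G m n A B

/-- Wagner characterization: a graph is planar iff it has no `K_5` and no `K_{3,3}` minor. -/
def IsPlanar {V : Type*} (G : SimpleGraph V) : Prop :=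
  ¬ HasCompleteMinor G 5 ∧ ¬ HasBipartiteMinor G 3 3

/-- Minor characterization of outerplanarity: no `K_4` and no `K_{2,3}` minor. -/
def IsOuterplanar {V : Type*} (G : SimpleGraph V) : Prop :=
  ¬ HasCompleteMinor G 4 ∧ ¬ HasBipartiteMinor G 2 3

/-!
By compactness it suffices to 3-colour finite graphs without a `K₄` minor, and for these it
suffices to find a vertex of degree at most two, remove it and induct. Such a vertex exists by
Dirac's lemma: if `G` is finite, `ab` is an edge, some vertex lies outside `{a, b}` and every
vertex outside `{a, b}` has degree at least three, then `G` has a `K₄` minor.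

Dirac's lemma is proved by induction on the number of vertices. If some edge `xy` has two common
neighbours `u` and `w`, either `u` and `w` are joined in `G - x - y`, and the triangle `xyu`
together with a `u`-`w` path gives a `K₄` minor, or the component of one of them that misses `a`
and `b`, together with `x` and `y`, is a smaller instance rooted at `xy`. Otherwise every edge
lies in at most one triangle, and contracting an edge `xy` with `y ∉ {a, b}` keeps every degree
outside `{a, b}` at least three as soon as the common neighbour of `x` and `y`, if any, has degree
at least four. Such an edge exists: if a common neighbour `z` of an edge has degree three, the
edge from `z` to its third neighbour lies in no triangle.
-/

lemma Set.exists_mem_ne_ne_of_two_lt_ncard {α : Type*} {s : Set α} (hs : 2 < s.ncard) (a b : α) :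
    ∃ c ∈ s, c ≠ a ∧ c ≠ b := by
  have hab : ({a, b} : Set α).ncard < s.ncard := (Set.ncard_insert_le a {b}).trans_lt (by simpa)
  obtain ⟨c, hc, hcab⟩ := Set.exists_mem_notMem_of_ncard_lt_ncard hab
  simp only [Set.mem_insert_iff, Set.mem_singleton_iff, not_or] at hcab
  exact ⟨c, hc, hcab⟩

namespace SimpleGraph

variable {V W : Type*} {G : SimpleGraph V} {H : SimpleGraph W}

lemma connected_induce_singleton (v : V) : (G.induce {v}).Connected := by
  rw [induce_singleton_eq_top]
  exact connected_top

lemma Connected.induce_image (f : G →g H) {s : Set V} (hs : (G.induce s).Connected) :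
    (H.induce (f '' s)).Connected := by
  let φ : G.induce s →g H.induce (f '' s) := ⟨fun v => ⟨f v, v, v.2, rfl⟩, f.map_adj⟩
  exact hs.map φ (by rintro ⟨_, v, hv, rfl⟩; exact ⟨⟨v, hv⟩, rfl⟩)

def quotient (G : SimpleGraph V) (f : V → W) : SimpleGraph W :=
  fromRel fun p q => ∃ u v, f u = p ∧ f v = q ∧ G.Adj u v

lemma quotient_adj {f : V → W} {p q : W} :
    (G.quotient f).Adj p q ↔ p ≠ q ∧ ∃ u v, f u = p ∧ f v = q ∧ G.Adj u v := by
  simp only [quotient, fromRel_adj, and_congr_right_iff]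
  intro _
  constructor
  · rintro (h | ⟨u, v, hu, hv, huv⟩)
    · exact h
    · exact ⟨v, u, hv, hu, huv.symm⟩
  · exact Or.inl

lemma Connected.induce_preimage {f : V → W} (hfib : ∀ p, (G.induce (f ⁻¹' {p})).Connected)
    {s : Set W} (hs : ((G.quotient f).induce s).Connected) :
    (G.induce (f ⁻¹' s)).Connected := by
  have fibre {u v : V} (hu : f u ∈ s) (huv : f u = f v) :
      (G.induce (f ⁻¹' s)).Reachable ⟨u, hu⟩ ⟨v, show f v ∈ s from huv ▸ hu⟩ :=
    ((hfib (f u)).preconnected ⟨u, rfl⟩ ⟨v, huv.symm⟩).map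
      (induceHomOfLE G fun w (hw : f w = f u) => show f w ∈ s from hw ▸ hu).toHom
  obtain ⟨⟨p, hp⟩⟩ := hs.nonempty
  obtain ⟨⟨u, rfl⟩⟩ := (hfib p).nonempty
  rw [connected_iff_exists_forall_reachable]
  refine ⟨⟨u, hp⟩, fun ⟨v, hv⟩ => ?_⟩
  suffices ∀ q : s, Relation.ReflTransGen ((G.quotient f).induce s).Adj ⟨f u, hp⟩ q →
      ∀ v (hv : f v = q),
        (G.induce (f ⁻¹' s)).Reachable ⟨u, hp⟩ ⟨v, show f v ∈ s from hv ▸ q.2⟩ from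
    this ⟨f v, hv⟩ ((reachable_iff_reflTransGen _ _).1 (hs.preconnected _ _)) v rfl
  intro q hq
  induction hq with
  | refl => exact fun v hv => fibre hp hv.symm
  | @tail q r _ hqr ih =>
    intro v hv
    obtain ⟨-, u', v', hu', hv', huv'⟩ := quotient_adj.1 hqr
    have hu's : f u' ∈ s := hu' ▸ q.2
    have hv's : f v' ∈ s := hv' ▸ r.2
    exact ((ih u' hu').trans (Adj.reachable (G := G.induce (f ⁻¹' s))
      (u := ⟨u', hu's⟩) (v := ⟨v', hv's⟩) huv')).trans (fibre hv's (hv'.trans hv.symm))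

lemma ncard_le_ncard_neighborSet_quotient [Finite W] {f : V → W} {p : W} {A : Set V}
    (hinj : Set.InjOn f A) (hA : ∀ t ∈ A, f t ≠ p ∧ ∃ v, f v = p ∧ G.Adj v t) :
    A.ncard ≤ ((G.quotient f).neighborSet p).ncard := by
  rw [← hinj.ncard_image]
  refine Set.ncard_le_ncard ?_ (Set.toFinite _)
  rintro _ ⟨t, ht, rfl⟩
  obtain ⟨hne, v, rfl, hvt⟩ := hA t ht
  exact quotient_adj.2 ⟨hne.symm, v, t, rfl, rfl, hvt⟩

lemma ncard_neighborSet_induce {s : Set V} {v : V} (hv : v ∈ s) (hs : G.neighborSet v ⊆ s) :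
    ((G.induce s).neighborSet ⟨v, hv⟩).ncard = (G.neighborSet v).ncard := by
  have himg : Subtype.val '' (G.induce s).neighborSet ⟨v, hv⟩ = G.neighborSet v := by
    ext u
    exact ⟨fun ⟨w, hw, hwu⟩ => hwu ▸ hw, fun hu => ⟨⟨u, hs hu⟩, hu, rfl⟩⟩
  rw [← himg, Set.ncard_image_of_injective _ Subtype.val_injective]

section componentIn

variable {s : Set V} {a b c d t u : V}

/-- The component of `c` in `G[s]`, as a set of vertices of `G` (empty when `c ∉ s`). -/
def componentIn (G : SimpleGraph V) (s : Set V) (c : V) : Set V :=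
  {t | ∃ (hc : c ∈ s) (ht : t ∈ s), (G.induce s).Reachable ⟨c, hc⟩ ⟨t, ht⟩}

lemma componentIn_subset : G.componentIn s c ⊆ s := fun _ ⟨_, ht, _⟩ => ht

lemma mem_componentIn_self (hc : c ∈ s) : c ∈ G.componentIn s c := ⟨hc, hc, .refl _⟩

lemma mem_componentIn_comm : t ∈ G.componentIn s c ↔ c ∈ G.componentIn s t :=
  ⟨fun ⟨hc, ht, h⟩ => ⟨ht, hc, h.symm⟩, fun ⟨ht, hc, h⟩ => ⟨hc, ht, h.symm⟩⟩

lemma mem_componentIn_trans (ht : t ∈ G.componentIn s c) (hu : u ∈ G.componentIn s t) :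
    u ∈ G.componentIn s c := by
  obtain ⟨hc, hts, hct⟩ := ht
  obtain ⟨_, hus, htu⟩ := hu
  exact ⟨hc, hus, hct.trans htu⟩

lemma mem_componentIn_of_adj (ht : t ∈ G.componentIn s c) (htu : G.Adj t u) (hu : u ∈ s) :
    u ∈ G.componentIn s c := by
  obtain ⟨hc, hts, hct⟩ := ht
  exact ⟨hc, hu,
    hct.trans (Adj.reachable (G := G.induce s) (u := ⟨t, hts⟩) (v := ⟨u, hu⟩) htu)⟩

lemma notMem_componentIn_of_adj (hab : G.Adj a b)
    (hd : d ∉ G.componentIn s c) (hc : a ∈ G.componentIn s c ∨ b ∈ G.componentIn s c) :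
    a ∉ G.componentIn s d ∧ b ∉ G.componentIn s d := by
  constructor
  · intro had
    have hac : a ∈ G.componentIn s c :=
      hc.elim id fun hbc => mem_componentIn_of_adj hbc hab.symm (componentIn_subset had)
    exact hd (mem_componentIn_trans hac (mem_componentIn_comm.1 had))
  · intro hbd
    have hbc : b ∈ G.componentIn s c :=
      hc.elim (fun hac => mem_componentIn_of_adj hac hab (componentIn_subset hbd)) id
    exact hd (mem_componentIn_trans hbc (mem_componentIn_comm.1 hbd))

end componentIn

section mergeMap

variable {x y z : V}

open Classical in
/-- `G.quotient (mergeMap hxy)` is `G` with the edge `xy` contracted. -/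
noncomputable def mergeMap (hxy : x ≠ y) (v : V) : {v // v ≠ y} :=
  if h : v = y then ⟨x, hxy⟩ else ⟨v, h⟩

lemma mergeMap_of_ne (hxy : x ≠ y) (hv : z ≠ y) : mergeMap hxy z = ⟨z, hv⟩ := dif_neg hv

lemma mergeMap_self (hxy : x ≠ y) : mergeMap hxy y = ⟨x, hxy⟩ := dif_pos rfl

lemma mergeMap_eq_iff (hxy : x ≠ y) {p : {v // v ≠ y}} :
    mergeMap hxy z = p ↔ z = p ∨ z = y ∧ (p : V) = x := by
  by_cases hz : z = y
  · subst hz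
    rw [mergeMap_self, Subtype.ext_iff]
    exact ⟨fun h => Or.inr ⟨rfl, h.symm⟩,
      fun h => h.elim (fun h' => absurd h' p.2.symm) fun h' => h'.2.symm⟩
  · rw [mergeMap_of_ne hxy hz, Subtype.ext_iff]
    simp [hz]

lemma mergeMap_injOn (hxy : x ≠ y) {A : Set V} (hA : x ∉ A ∨ y ∉ A) :
    Set.InjOn (mergeMap hxy) A := by
  intro u hu v hv huv
  by_cases huy : u = y <;> by_cases hvy : v = y
  · exact huy.trans hvy.symm
  · rw [huy, mergeMap_self, mergeMap_of_ne hxy hvy, Subtype.mk.injEq] at huv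
    exact absurd ⟨huv ▸ hv, huy ▸ hu⟩ (not_and_or.2 hA)
  · rw [hvy, mergeMap_self, mergeMap_of_ne hxy huy, Subtype.mk.injEq] at huv
    exact absurd ⟨huv ▸ hu, hvy ▸ hv⟩ (not_and_or.2 hA)
  · rwa [mergeMap_of_ne hxy huy, mergeMap_of_ne hxy hvy, Subtype.mk.injEq] at huv

lemma connected_induce_preimage_mergeMap (hxy : G.Adj x y) (p : {v // v ≠ y}) :
    (G.induce (mergeMap hxy.ne ⁻¹' {p})).Connected := by
  by_cases hp : (p : V) = x
  · have : mergeMap hxy.ne ⁻¹' {p} = {x, y} := by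
      ext v; simp [mergeMap_eq_iff, hp]
    rw [this]
    exact induce_pair_connected_of_adj hxy
  · have : mergeMap hxy.ne ⁻¹' {p} = {(p : V)} := by
      ext v; simp [mergeMap_eq_iff, hp]
    rw [this]
    exact connected_induce_singleton _

lemma three_le_ncard_neighborSet_union_sdiff [Finite V] (hxy : G.Adj x y)
    (hx : 3 ≤ (G.neighborSet x).ncard) (hy : 3 ≤ (G.neighborSet y).ncard)
    (hc : (G.commonNeighbors x y).ncard ≤ 1) :
    3 ≤ ((G.neighborSet x ∪ G.neighborSet y) \ {x, y}).ncard := by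
  have hsplit : (G.neighborSet x ∪ G.neighborSet y) \ {x, y} =
      (G.neighborSet x \ {y}) ∪ (G.neighborSet y \ {x}) := by
    ext t
    simp only [Set.mem_sdiff, Set.mem_union, mem_neighborSet, Set.mem_insert_iff,
      Set.mem_singleton_iff, not_or]
    constructor
    · rintro ⟨hxt | hyt, htx, hty⟩
      · exact Or.inl ⟨hxt, hty⟩
      · exact Or.inr ⟨hyt, htx⟩
    · rintro (⟨hxt, hty⟩ | ⟨hyt, htx⟩)
      · exact ⟨Or.inl hxt, hxt.ne', hty⟩
      · exact ⟨Or.inr hyt, htx, hyt.ne'⟩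
  have hinter : (G.neighborSet x \ {y}) ∩ (G.neighborSet y \ {x}) ⊆ G.commonNeighbors x y :=
    fun t ht => ⟨ht.1.1, ht.2.1⟩
  have hsum := Set.ncard_union_add_ncard_inter (G.neighborSet x \ {y}) (G.neighborSet y \ {x})
  have hle := Set.ncard_le_ncard hinter
  rw [Set.ncard_sdiff_singleton_of_mem (show y ∈ G.neighborSet x from hxy),
    Set.ncard_sdiff_singleton_of_mem (show x ∈ G.neighborSet y from hxy.symm)] at hsum
  rw [hsplit]
  omega

lemma ncard_le_ncard_neighborSet_quotient_mergeMap [Finite V] (hxy : G.Adj x y) (hzx : z ≠ x)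
    (hzy : z ≠ y) {A : Set V} (hA : A ⊆ G.neighborSet z) (hinj : x ∉ A ∨ y ∉ A) :
    A.ncard ≤ ((G.quotient (mergeMap hxy.ne)).neighborSet ⟨z, hzy⟩).ncard := by
  refine ncard_le_ncard_neighborSet_quotient (mergeMap_injOn _ hinj)
    fun t ht => ⟨?_, z, mergeMap_of_ne _ hzy, hA ht⟩
  rw [Ne, mergeMap_eq_iff]
  rintro (htz | ⟨-, hzx'⟩)
  · exact (hA ht).ne htz.symm
  · exact hzx hzx'

lemma three_le_ncard_neighborSet_quotient_mergeMap [Finite V] (hxy : G.Adj x y)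
    (hx : 3 ≤ (G.neighborSet x).ncard) (hy : 3 ≤ (G.neighborSet y).ncard)
    (hc : (G.commonNeighbors x y).ncard ≤ 1) :
    3 ≤ ((G.quotient (mergeMap hxy.ne)).neighborSet ⟨x, hxy.ne⟩).ncard := by
  refine (three_le_ncard_neighborSet_union_sdiff hxy hx hy hc).trans
    (ncard_le_ncard_neighborSet_quotient (mergeMap_injOn _ (Or.inr (by simp))) ?_)
  rintro t ⟨hxyt, htxy⟩
  simp only [Set.mem_insert_iff, Set.mem_singleton_iff, not_or] at htxy
  refine ⟨by rw [Ne, mergeMap_eq_iff]; tauto, ?_⟩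
  rcases hxyt with hxt | hyt
  · exact ⟨x, mergeMap_of_ne _ hxy.ne, hxt⟩
  · exact ⟨y, mergeMap_self _, hyt⟩

end mergeMap

end SimpleGraph

section CompleteMinor

variable {V W : Type*} {G : SimpleGraph V} {H : SimpleGraph W} {n : ℕ}

lemma HasCompleteMinor.map (f : G →g H) (hf : Function.Injective f) :
    HasCompleteMinor G n → HasCompleteMinor H n := by
  rintro ⟨B, hne, hconn, hdisj, hadj⟩
  refine ⟨fun i => f '' B i, fun i => (hne i).image f, fun i => (hconn i).induce_image f,
    fun i j hij => (Set.disjoint_image_iff hf).2 (hdisj i j hij), fun i j hij => ?_⟩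
  obtain ⟨u, hu, v, hv, huv⟩ := hadj i j hij
  exact ⟨f u, Set.mem_image_of_mem f hu, f v, Set.mem_image_of_mem f hv, f.map_adj huv⟩

lemma HasCompleteMinor.of_quotient {f : V → W}
    (hfib : ∀ p, (G.induce (f ⁻¹' {p})).Connected) :
    HasCompleteMinor (G.quotient f) n → HasCompleteMinor G n := by
  rintro ⟨B, hne, hconn, hdisj, hadj⟩
  refine ⟨fun i => f ⁻¹' B i, fun i => ?_, fun i => (hconn i).induce_preimage hfib,
    fun i j hij => (hdisj i j hij).preimage f, fun i j hij => ?_⟩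
  · obtain ⟨p, hp⟩ := hne i
    obtain ⟨⟨u, rfl⟩⟩ := (hfib p).nonempty
    exact ⟨u, hp⟩
  · obtain ⟨p, hp, q, hq, hpq⟩ := hadj i j hij
    obtain ⟨-, u, v, rfl, rfl, huv⟩ := quotient_adj.1 hpq
    exact ⟨u, hp, v, hq, huv⟩

lemma isCompleteMinorWitness_zero (B : Fin 0 → Set V) : IsCompleteMinorWitness G 0 B :=
  ⟨finZeroElim, finZeroElim, finZeroElim, finZeroElim⟩

lemma IsCompleteMinorWitness.cons {B : Fin n → Set V} (hB : IsCompleteMinorWitness G n B)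
    {C : Set V} (hC : (G.induce C).Connected) (hdisj : ∀ i, Disjoint C (B i))
    (hadj : ∀ i, ∃ u ∈ C, ∃ v ∈ B i, G.Adj u v) :
    IsCompleteMinorWitness G (n + 1) (Fin.cons C B) := by
  obtain ⟨hBne, hBconn, hBdisj, hBadj⟩ := hB
  refine ⟨Fin.cases ?_ hBne, Fin.cases hC hBconn, Fin.cases ?_ ?_, Fin.cases ?_ ?_⟩
  · obtain ⟨⟨v, hv⟩⟩ := hC.nonempty
    exact ⟨v, hv⟩
  · exact Fin.cases (fun h => absurd rfl h) fun j _ => hdisj j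
  · exact fun i => Fin.cases (fun _ => (hdisj i).symm)
      fun j hij => hBdisj i j (Fin.succ_injective _ |>.ne_iff.1 hij)
  · exact Fin.cases (fun h => absurd rfl h) fun j _ => hadj j
  · refine fun i => Fin.cases (fun _ => ?_)
      fun j hij => hBadj i j (Fin.succ_injective _ |>.ne_iff.1 hij)
    obtain ⟨u, hu, v, hv, huv⟩ := hadj i
    exact ⟨v, hv, u, hu, huv.symm⟩

lemma hasCompleteMinor_four_of_triangle {x y z : V} {C : Set V}
    (hxy : G.Adj x y) (hxz : G.Adj x z) (hyz : G.Adj y z) (hC : (G.induce C).Connected)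
    (hxC : x ∉ C) (hyC : y ∉ C) (hzC : z ∉ C)
    (hx : ∃ u ∈ C, G.Adj u x) (hy : ∃ u ∈ C, G.Adj u y) (hz : ∃ u ∈ C, G.Adj u z) :
    HasCompleteMinor G 4 := by
  refine ⟨_, ((((isCompleteMinorWitness_zero finZeroElim).cons (connected_induce_singleton x)
    finZeroElim finZeroElim).cons (connected_induce_singleton y) ?_ ?_).cons
    (connected_induce_singleton z) ?_ ?_).cons hC ?_ ?_⟩ <;>
    simp [Fin.forall_fin_succ, hxy.symm, hxz.symm, hyz.symm, hxy.ne', hxz.ne', hyz.ne', hxC, hyC,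
      hzC, hx, hy, hz]

lemma hasCompleteMinor_four_of_mem_componentIn {x y u w : V} (hxy : G.Adj x y)
    (hu : u ∈ G.commonNeighbors x y) (hw : w ∈ G.commonNeighbors x y) (huw : u ≠ w)
    (hr : w ∈ G.componentIn {x, y}ᶜ u) : HasCompleteMinor G 4 := by
  classical
  rw [mem_commonNeighbors] at hu hw
  obtain ⟨hus, hws, ⟨p⟩⟩ := hr
  obtain ⟨q, hq⟩ := p.toPath
  revert hq
  cases q with
  | nil => exact absurd rfl huw
  | @cons _ v _ huv q =>
    intro hq
    rw [Walk.cons_isPath_iff] at hq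
    have hC := q.connected_induce_support.induce_image (Embedding.induce _).toHom
    refine hasCompleteMinor_four_of_triangle hxy hu.1 hu.2 hC ?_ ?_ ?_
      ⟨w, ⟨_, q.end_mem_support, rfl⟩, hw.1.symm⟩
      ⟨w, ⟨_, q.end_mem_support, rfl⟩, hw.2.symm⟩
      ⟨v, ⟨_, q.start_mem_support, rfl⟩, huv.symm⟩
    · rintro ⟨t, -, htx⟩
      exact t.2 (Or.inl htx)
    · rintro ⟨t, -, hty⟩
      exact t.2 (Or.inr hty)
    · rintro ⟨t, ht, htu⟩
      exact hq.2 ((Subtype.ext htu : t = ⟨u, hus⟩) ▸ ht)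

end CompleteMinor

namespace SimpleGraph

variable {V : Type*} {G : SimpleGraph V} {a b c x y : V}

structure IsMinDegreeThreeOffEdge (G : SimpleGraph V) (a b : V) : Prop where
  adj : G.Adj a b
  three_le : ∀ v, v ≠ a → v ≠ b → 3 ≤ (G.neighborSet v).ncard
  exists_ne : ∃ v, v ≠ a ∧ v ≠ b

lemma IsMinDegreeThreeOffEdge.induce_componentIn (h : G.IsMinDegreeThreeOffEdge a b)
    (hxy : G.Adj x y) (hc : c ∈ ({x, y} : Set V)ᶜ) (ha : a ∉ G.componentIn {x, y}ᶜ c)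
    (hb : b ∉ G.componentIn {x, y}ᶜ c) :
    (G.induce (G.componentIn {x, y}ᶜ c ∪ {x, y})).IsMinDegreeThreeOffEdge
      ⟨x, by simp⟩ ⟨y, by simp⟩ where
  adj := hxy
  three_le := by
    rintro ⟨t, ht⟩ htx hty
    have htR : t ∈ G.componentIn {x, y}ᶜ c := by
      simp only [ne_eq, Subtype.mk.injEq] at htx hty
      simpa [htx, hty] using ht
    rw [ncard_neighborSet_induce ht]
    · exact h.three_le t (fun hta => ha (hta ▸ htR)) (fun htb => hb (htb ▸ htR))
    · intro u htu
      by_cases hu : u ∈ ({x, y} : Set V)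
      · exact Or.inr hu
      · exact Or.inl (mem_componentIn_of_adj htR htu hu)
  exists_ne :=
    ⟨⟨c, Or.inl (mem_componentIn_self hc)⟩, fun hcx => hc (Or.inl congr($hcx.1)),
      fun hcy => hc (Or.inr congr($hcy.1))⟩

lemma IsMinDegreeThreeOffEdge.quotient_mergeMap [Finite V] (h : G.IsMinDegreeThreeOffEdge a b)
    (hxy : G.Adj x y) (hya : y ≠ a) (hyb : y ≠ b) (hc : (G.commonNeighbors x y).ncard ≤ 1)
    (hdeg : ∀ z ∈ G.commonNeighbors x y, z ≠ a → z ≠ b →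
      4 ≤ (G.neighborSet z).ncard) :
    (G.quotient (mergeMap hxy.ne)).IsMinDegreeThreeOffEdge ⟨a, hya.symm⟩ ⟨b, hyb.symm⟩ where
  adj := quotient_adj.2 ⟨fun hab => h.adj.ne congr($hab.1), a, b, mergeMap_of_ne _ _,
    mergeMap_of_ne _ _, h.adj⟩
  three_le := by
    rintro ⟨z, hzy⟩ hza hzb
    replace hza : z ≠ a := fun e => hza (Subtype.ext e)
    replace hzb : z ≠ b := fun e => hzb (Subtype.ext e)
    by_cases hzx : z = x
    · subst hzx
      exact three_le_ncard_neighborSet_quotient_mergeMap hxy (h.three_le _ hza hzb)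
        (h.three_le y hya hyb) hc
    by_cases hz : z ∈ G.commonNeighbors x y
    · have h4 := hdeg z hz hza hzb
      have hpred := Set.pred_ncard_le_ncard_sdiff_singleton (G.neighborSet z) y
      have := ncard_le_ncard_neighborSet_quotient_mergeMap hxy hzx hzy
        (A := G.neighborSet z \ {y}) Set.sdiff_subset (Or.inr fun hy => hy.2 rfl)
      omega
    · rw [mem_commonNeighbors, not_and_or] at hz
      exact (h.three_le z hza hzb).trans (ncard_le_ncard_neighborSet_quotient_mergeMap hxy hzx hzy
        subset_rfl (hz.imp (fun hxz hzx' => hxz hzx'.symm) fun hyz hzy' => hyz hzy'.symm))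
  exists_ne := by
    obtain ⟨t, hyt, hta, htb⟩ := Set.exists_mem_ne_ne_of_two_lt_ncard (h.three_le y hya hyb) a b
    exact ⟨⟨t, hyt.ne'⟩, fun e => hta congr($e.1), fun e => htb congr($e.1)⟩

lemma IsMinDegreeThreeOffEdge.exists_contractible_edge [Finite V]
    (h : G.IsMinDegreeThreeOffEdge a b)
    (hc : ∀ x y, G.Adj x y → (G.commonNeighbors x y).ncard ≤ 1) :
    ∃ x y, G.Adj x y ∧ y ≠ a ∧ y ≠ b ∧
      ∀ z ∈ G.commonNeighbors x y, z ≠ a → z ≠ b → 4 ≤ (G.neighborSet z).ncard := by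
  obtain ⟨y, hya, hyb⟩ := h.exists_ne
  obtain ⟨x, hyx, -⟩ := Set.exists_mem_ne_ne_of_two_lt_ncard (h.three_le y hya hyb) a b
  by_cases hgood :
      ∀ z ∈ G.commonNeighbors x y, z ≠ a → z ≠ b → 4 ≤ (G.neighborSet z).ncard
  · exact ⟨x, y, hyx.symm, hya, hyb, hgood⟩
  push Not at hgood
  obtain ⟨z, ⟨hxz, hyz⟩, hza, hzb, hz⟩ := hgood
  obtain ⟨w, hzw, hwx, hwy⟩ := Set.exists_mem_ne_ne_of_two_lt_ncard (h.three_le z hza hzb) x y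
  have hNz : {x, y, w} = G.neighborSet z := by
    refine Set.eq_of_subset_of_ncard_le ?_ ?_ (Set.toFinite _)
    · simp only [Set.insert_subset_iff, Set.singleton_subset_iff, mem_neighborSet]
      exact ⟨hxz.symm, hyz.symm, hzw⟩
    · rw [Set.ncard_eq_three.2 ⟨x, y, w, hyx.ne', hwx.symm, hwy.symm, rfl⟩]
      omega
  -- `zw` lies in no triangle: a common neighbour `x` or `y` would give `xz` or `yz` a second one
  refine ⟨w, z, hzw.symm, hza, hzb, fun t ⟨hwt, hzt⟩ _ _ => (?_ : False).elim⟩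
  have hcommon {s r : V} (hsz : G.Adj s z) (hsr : G.Adj s r) (hzr : G.Adj z r) (hsw : G.Adj s w)
      (hrw : r ≠ w) : False := by
    have := (Set.one_lt_ncard_iff (s := G.commonNeighbors s z)).2
      ⟨r, w, ⟨hsr, hzr⟩, ⟨hsw, hzw⟩, hrw⟩
    have := hc s z hsz
    omega
  rcases hNz ▸ hzt with rfl | rfl | rfl
  · exact hcommon hxz hyx.symm hyz.symm hwt.symm hwy.symm
  · exact hcommon hyz hyx hxz.symm hwt.symm hwx.symm
  · exact hwt.ne rfl

theorem IsMinDegreeThreeOffEdge.hasCompleteMinor_four [Finite V]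
    (h : G.IsMinDegreeThreeOffEdge a b) : HasCompleteMinor G 4 := by
  induction hn : Nat.card V using Nat.strong_induction_on generalizing V with
  | _ n ih =>
  by_cases hA : ∃ x y, G.Adj x y ∧ 1 < (G.commonNeighbors x y).ncard
  · obtain ⟨x, y, hxy, hxy2⟩ := hA
    obtain ⟨u, w, hu, hw, huw⟩ := (Set.one_lt_ncard_iff).1 hxy2
    have hcompl {t : V} (ht : t ∈ G.commonNeighbors x y) : t ∈ ({x, y} : Set V)ᶜ := by
      rintro (rfl | rfl)
      exacts [ht.1.ne rfl, ht.2.ne rfl]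
    by_cases hr : w ∈ G.componentIn {x, y}ᶜ u
    · exact hasCompleteMinor_four_of_mem_componentIn hxy hu hw huw hr
    obtain ⟨c, d, hc, hd, hdc, hac, hbc⟩ : ∃ c d, c ∈ ({x, y} : Set V)ᶜ ∧
        d ∈ ({x, y} : Set V)ᶜ ∧ d ∉ G.componentIn {x, y}ᶜ c ∧
        a ∉ G.componentIn {x, y}ᶜ c ∧ b ∉ G.componentIn {x, y}ᶜ c := by
      by_cases hu' : a ∈ G.componentIn {x, y}ᶜ u ∨ b ∈ G.componentIn {x, y}ᶜ u
      · exact ⟨w, u, hcompl hw, hcompl hu, fun h' => hr (mem_componentIn_comm.1 h'),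
          notMem_componentIn_of_adj h.adj hr hu'⟩
      · push Not at hu'
        exact ⟨u, w, hcompl hu, hcompl hw, hr, hu'⟩
    have hlt : Nat.card ↥(G.componentIn {x, y}ᶜ c ∪ {x, y}) < n :=
      hn ▸ Finite.card_subtype_lt (x := d) fun hd' => hd'.elim hdc hd
    exact (ih _ hlt (h.induce_componentIn hxy hc hac hbc) rfl).map (Embedding.induce _).toHom
      Subtype.val_injective
  · push Not at hA
    obtain ⟨x, y, hxy, hya, hyb, hdeg⟩ := h.exists_contractible_edge hA
    have hlt : Nat.card {v // v ≠ y} < n := hn ▸ Finite.card_subtype_lt (x := y) (by simp)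
    exact .of_quotient (connected_induce_preimage_mergeMap hxy)
      (ih _ hlt (h.quotient_mergeMap hxy hya hyb (hA x y hxy) hdeg) rfl)

lemma Colorable.of_induce_compl_singleton {n : ℕ} {v : V} (hfin : (G.neighborSet v).Finite)
    (hv : (G.neighborSet v).ncard < n) (h : (G.induce {v}ᶜ).Colorable n) : G.Colorable n := by
  classical
  obtain ⟨C⟩ := h
  have hused : (C '' {u | G.Adj v u}).ncard < (Set.univ : Set (Fin n)).ncard := by
    calc (C '' {u | G.Adj v u}).ncard
        ≤ (Subtype.val ⁻¹' G.neighborSet v : Set ↥({v}ᶜ : Set V)).ncard :=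
          Set.ncard_image_le (hfin.preimage Subtype.val_injective.injOn)
      _ = (G.neighborSet v).ncard := Set.ncard_preimage_of_injective_subset_range
          Subtype.val_injective fun u (hu : G.Adj v u) => ⟨⟨u, hu.ne'⟩, rfl⟩
      _ < (Set.univ : Set (Fin n)).ncard := by simpa using hv
  obtain ⟨k, -, hk⟩ := Set.exists_mem_notMem_of_ncard_lt_ncard hused
  refine ⟨Coloring.mk (fun u => if hu : u = v then k else C ⟨u, hu⟩) fun {u w} huw => ?_⟩
  by_cases hu : u = v <;> by_cases hw : w = v <;> simp only [hu, hw, dite_true, dite_false]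
  · exact absurd (hu.trans hw.symm) huw.ne
  · exact fun hkw => hk ⟨⟨w, hw⟩, hu ▸ huw, hkw.symm⟩
  · exact fun hku => hk ⟨⟨u, hu⟩, hw ▸ huw.symm, hku⟩
  · exact C.valid huw

lemma exists_ncard_neighborSet_le_two [Finite V] [Nonempty V] (h : ¬ HasCompleteMinor G 4) :
    ∃ v, (G.neighborSet v).ncard ≤ 2 := by
  by_contra! hdeg
  obtain ⟨v⟩ := ‹Nonempty V›
  obtain ⟨u, hvu, -⟩ := Set.exists_mem_ne_ne_of_two_lt_ncard (hdeg v) v v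
  obtain ⟨w, -, hwv, hwu⟩ := Set.exists_mem_ne_ne_of_two_lt_ncard (hdeg v) v u
  exact h (IsMinDegreeThreeOffEdge.hasCompleteMinor_four
    ⟨hvu, fun x _ _ => hdeg x, w, hwv, hwu⟩)

lemma colorable_three_of_finite_of_not_hasCompleteMinor_four [Finite V]
    (h : ¬ HasCompleteMinor G 4) : G.Colorable 3 := by
  induction hn : Nat.card V using Nat.strong_induction_on generalizing V with
  | _ n ih =>
  cases isEmpty_or_nonempty V
  · exact .of_isEmpty 3
  obtain ⟨v, hv⟩ := exists_ncard_neighborSet_le_two h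
  have hlt : Nat.card ↥({v}ᶜ : Set V) < n := hn ▸ Finite.card_subtype_lt (x := v) (by simp)
  refine .of_induce_compl_singleton (Set.toFinite _) (by omega) (ih _ hlt (fun hK => h ?_) rfl)
  exact hK.map (Embedding.induce _).toHom Subtype.val_injective

lemma colorable_three_of_not_hasCompleteMinor_four (h : ¬ HasCompleteMinor G 4) :
    G.Colorable 3 := by
  refine (nonempty_hom_of_forall_finite_subgraph_hom fun G' hfin => ?_).elim fun f => ⟨f⟩
  have : Finite G'.verts := hfin.to_subtype
  exact (colorable_three_of_finite_of_not_hasCompleteMinor_four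
    fun hK => h (hK.map G'.hom Subgraph.hom_injective)).some

end SimpleGraph

/-- Hadwiger's conjecture for k = 4 (Dirac): every graph with chromatic number at
least 4 contains a `K_4` minor. -/
theorem hasCompleteMinor_four_of_chromaticNumber {V : Type*} (G : SimpleGraph V)
    (h : 4 ≤ G.chromaticNumber) : HasCompleteMinor G 4 := by
  by_contra hK4
  have h3 : G.chromaticNumber ≤ 3 :=
    (colorable_three_of_not_hasCompleteMinor_four hK4).chromaticNumber_le
  exact absurd (h.trans h3) (by norm_num)
end

section
/- If a graph G is vertex-2-connected, then for any three distinct vertices v1, v2, v3 of G there is a K_3 minor whose three branch sets contain v1, v2, v3 respectively; equivalently, there is a cycle through connecting structure realizing a topological triangle on {v1, v2, v3}. -/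
open SimpleGraph

/-- `G` remains connected after deleting any single vertex. -/
def TwoConnected {V : Type*} (G : SimpleGraph V) : Prop :=
  ∀ v : V, (G.induce {v}ᶜ).Connected

/-!
Take a path `P` from `v2` to `v3` avoiding `v1`, and let `C` be the component of `v1` in
`G - V(P)`. A walk from `C` to a vertex `t` of `P` avoiding another vertex `s` of `P` first
leaves `C` at a neighbour of `C` on `P` other than `s`; applied twice, this gives two distinct
neighbours of `C` on `P`. Cutting `P` at an edge lying between them splits it into two subpaths,
each adjacent to `C` and to the other, so `C` and the two subpaths are the branch sets.
-/

namespace SimpleGraph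

variable {V : Type*} {G : SimpleGraph V}

/-- The vertex set of the component of `v` in `G - S` (empty when `v ∈ S`). -/
def reachableAvoiding (G : SimpleGraph V) (S : Set V) (v : V) : Set V :=
  {b | ∃ w : G.Walk v b, ∀ z ∈ w.support, z ∉ S}

section reachableAvoiding

variable {S : Set V} {v b c : V}

theorem notMem_of_mem_reachableAvoiding (hb : b ∈ G.reachableAvoiding S v) : b ∉ S :=
  let ⟨w, hw⟩ := hb
  hw b w.end_mem_support

theorem self_mem_reachableAvoiding (hv : v ∉ S) : v ∈ G.reachableAvoiding S v :=
  ⟨.nil, by simpa using hv⟩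

theorem mem_reachableAvoiding_of_adj (hb : b ∈ G.reachableAvoiding S v) (hbc : G.Adj b c)
    (hc : c ∉ S) : c ∈ G.reachableAvoiding S v := by
  obtain ⟨w, hw⟩ := hb
  refine ⟨w.concat hbc, fun z hz => ?_⟩
  rw [Walk.support_concat, List.mem_append, List.mem_singleton] at hz
  rcases hz with hz | rfl
  exacts [hw z hz, hc]

theorem support_subset_reachableAvoiding (w : G.Walk v b) (hw : ∀ z ∈ w.support, z ∉ S) :
    {z | z ∈ w.support} ⊆ G.reachableAvoiding S v := by
  classical
  exact fun z hz => ⟨w.takeUntil z hz, fun y hy => hw y (w.support_takeUntil_subset_support hz hy)⟩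

theorem connected_induce_reachableAvoiding (hv : v ∉ S) :
    (G.induce (G.reachableAvoiding S v)).Connected :=
  G.induce_connected_of_patches v (self_mem_reachableAvoiding hv) fun ⟨w, hw⟩ =>
    ⟨_, support_subset_reachableAvoiding w hw, w.start_mem_support, w.end_mem_support,
      w.connected_induce_support.preconnected _ _⟩

theorem exists_adj_reachableAvoiding_of_walk {t : V} (hv : v ∉ S) (w : G.Walk v t)
    (ht : t ∈ S) : ∃ p ∈ w.support, p ∈ S ∧ ∃ c ∈ G.reachableAvoiding S v, G.Adj c p := by
  obtain ⟨d, hd, hfst, hsnd⟩ := w.exists_boundary_dart _ (self_mem_reachableAvoiding hv)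
    fun h => notMem_of_mem_reachableAvoiding h ht
  refine ⟨d.snd, w.dart_snd_mem_support_of_mem_darts hd, ?_, d.fst, hfst, d.adj⟩
  by_contra hS
  exact hsnd (mem_reachableAvoiding_of_adj hfst d.adj hS)

end reachableAvoiding

namespace TwoConnected

variable {a b x : V}

theorem exists_walk_avoiding (h2 : TwoConnected G) (ha : a ≠ x) (hb : b ≠ x) :
    ∃ w : G.Walk a b, x ∉ w.support := by
  obtain ⟨w⟩ := (h2 x).preconnected ⟨a, ha⟩ ⟨b, hb⟩
  refine ⟨w.map (Embedding.induce {x}ᶜ).toHom, fun hx => ?_⟩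
  obtain ⟨z, -, hz⟩ := List.mem_map.mp ((Walk.support_map _ _) ▸ hx)
  exact z.2 hz

theorem exists_path_avoiding (h2 : TwoConnected G) (ha : a ≠ x) (hb : b ≠ x) :
    ∃ P : G.Walk a b, P.IsPath ∧ x ∉ P.support := by
  classical
  obtain ⟨w, hw⟩ := h2.exists_walk_avoiding ha hb
  exact ⟨w.bypass, w.bypass_isPath, fun h => hw (w.support_bypass_subset_support h)⟩

theorem exists_two_adj_reachableAvoiding (h2 : TwoConnected G) {S : Set V} {v s t : V}
    (hv : v ∉ S) (hs : s ∈ S) (ht : t ∈ S) (hst : s ≠ t) :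
    ∃ p ∈ S, ∃ q ∈ S, p ≠ q ∧ (∃ c ∈ G.reachableAvoiding S v, G.Adj c p) ∧
      (∃ c ∈ G.reachableAvoiding S v, G.Adj c q) := by
  have hne : ∀ {y}, y ∈ S → v ≠ y := fun hy h => hv (h ▸ hy)
  obtain ⟨w₁, hw₁⟩ := h2.exists_walk_avoiding (hne ht) hst
  obtain ⟨p, hpw, hpS, hp⟩ := exists_adj_reachableAvoiding_of_walk hv w₁ hs
  have htp : t ≠ p := fun h => hw₁ (h ▸ hpw)
  obtain ⟨w₂, hw₂⟩ := h2.exists_walk_avoiding (hne hpS) htp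
  obtain ⟨q, hqw, hqS, hq⟩ := exists_adj_reachableAvoiding_of_walk hv w₂ ht
  exact ⟨p, hpS, q, hqS, fun h => hw₂ (h ▸ hqw), hp, hq⟩

end TwoConnected

theorem Walk.exists_eq_append_cons_of_mem_support {u v p q : V} {T : Set V} (P : G.Walk u v)
    (hp : p ∈ P.support) (hq : q ∈ P.support) (hpT : p ∈ T) (hqT : q ∈ T) (hpq : p ≠ q) :
    ∃ (a b : V) (hab : G.Adj a b) (Q : G.Walk u a) (R : G.Walk b v),
      P = Q.append (.cons hab R) ∧ (∃ x ∈ Q.support, x ∈ T) ∧ ∃ y ∈ R.support, y ∈ T := by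
  induction P with
  | nil =>
    rw [Walk.support_nil, List.mem_singleton] at hp hq
    exact absurd (hp.trans hq.symm) hpq
  | @cons u w v h P ih =>
    rw [Walk.support_cons, List.mem_cons] at hp hq
    by_cases hu : u ∈ T
    · have hR : ∃ y ∈ P.support, y ∈ T := by
        rcases hp with rfl | hp
        · exact ⟨q, hq.resolve_left (Ne.symm hpq), hqT⟩
        · exact ⟨p, hp, hpT⟩
      exact ⟨u, w, h, .nil, P, rfl, ⟨u, Walk.start_mem_support _, hu⟩, hR⟩
    · have hne : ∀ {y}, y ∈ T → y ≠ u := fun hy h => hu (h ▸ hy)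
      obtain ⟨a, b, hab, Q, R, rfl, ⟨x, hxQ, hxT⟩, hR⟩ :=
        ih (hp.resolve_left (hne hpT)) (hq.resolve_left (hne hqT))
      exact ⟨a, b, hab, .cons h Q, R, rfl, ⟨x, List.mem_cons_of_mem _ hxQ, hxT⟩, hR⟩

theorem isCompleteMinorWitness_three {X Y Z : Set V} (hX : (G.induce X).Connected)
    (hY : (G.induce Y).Connected) (hZ : (G.induce Z).Connected) (hXY : Disjoint X Y)
    (hXZ : Disjoint X Z) (hYZ : Disjoint Y Z) (eXY : ∃ x ∈ X, ∃ y ∈ Y, G.Adj x y)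
    (eXZ : ∃ x ∈ X, ∃ z ∈ Z, G.Adj x z) (eYZ : ∃ y ∈ Y, ∃ z ∈ Z, G.Adj y z) :
    IsCompleteMinorWitness G 3 ![X, Y, Z] := by
  have symm {A B : Set V} : (∃ a ∈ A, ∃ b ∈ B, G.Adj a b) → ∃ b ∈ B, ∃ a ∈ A, G.Adj b a :=
    fun ⟨a, ha, b, hb, h⟩ => ⟨b, hb, a, ha, h.symm⟩
  refine ⟨fun i => ?_, fun i => ?_, fun i j hij => ?_, fun i j hij => ?_⟩
  · fin_cases i
    exacts [Set.nonempty_coe_sort.mp hX.nonempty, Set.nonempty_coe_sort.mp hY.nonempty,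
      Set.nonempty_coe_sort.mp hZ.nonempty]
  · fin_cases i
    exacts [hX, hY, hZ]
  · fin_cases i <;> fin_cases j <;> simp only [ne_eq, not_true_eq_false] at hij
    exacts [hXY, hXZ, hXY.symm, hYZ, hXZ.symm, hYZ.symm]
  · fin_cases i <;> fin_cases j <;> simp only [ne_eq, not_true_eq_false] at hij
    exacts [eXY, eXZ, symm eXY, eYZ, symm eXZ, symm eYZ]

theorem Walk.IsPath.isCompleteMinorWitness_of_eq_append_cons {u v a b : V} {P : G.Walk u v}
    (hP : P.IsPath) {Q : G.Walk u a} {R : G.Walk b v} {hab : G.Adj a b}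
    (hPQR : P = Q.append (.cons hab R)) {C : Set V} (hC : (G.induce C).Connected)
    (hCP : ∀ z ∈ P.support, z ∉ C) (hCQ : ∃ x ∈ Q.support, ∃ c ∈ C, G.Adj c x)
    (hCR : ∃ y ∈ R.support, ∃ c ∈ C, G.Adj c y) :
    IsCompleteMinorWitness G 3 ![C, {z | z ∈ Q.support}, {z | z ∈ R.support}] := by
  have hsupp : P.support = Q.support ++ R.support := by
    rw [hPQR, Walk.support_append, Walk.support_cons, List.tail_cons]
  have hQR : List.Disjoint Q.support R.support :=
    List.disjoint_of_nodup_append (hsupp ▸ hP.support_nodup)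
  have edge {B : Set V} : (∃ x ∈ B, ∃ c ∈ C, G.Adj c x) → ∃ c ∈ C, ∃ x ∈ B, G.Adj c x :=
    fun ⟨x, hx, c, hc, h⟩ => ⟨c, hc, x, hx, h⟩
  refine isCompleteMinorWitness_three hC Q.connected_induce_support R.connected_induce_support
    (Set.disjoint_right.mpr fun z hz => hCP z (hsupp ▸ List.mem_append_left _ hz))
    (Set.disjoint_right.mpr fun z hz => hCP z (hsupp ▸ List.mem_append_right _ hz))
    (Set.disjoint_left.mpr fun _ hzQ hzR => hQR hzQ hzR) (edge hCQ) (edge hCR)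
    ⟨a, Q.end_mem_support, b, R.start_mem_support, hab⟩

end SimpleGraph

theorem k3_minor_on_three_vertices_general {V : Type*} (G : SimpleGraph V)
    (h2 : TwoConnected G)
    (v1 v2 v3 : V) (h12 : v1 ≠ v2) (h13 : v1 ≠ v3) (h23 : v2 ≠ v3) :
    ∃ B : Fin 3 → Set V, IsCompleteMinorWitness G 3 B ∧
      v1 ∈ B 0 ∧ v2 ∈ B 1 ∧ v3 ∈ B 2 := by
  obtain ⟨P, hP, hv1P⟩ := h2.exists_path_avoiding h12.symm h13.symm
  set S : Set V := {z | z ∈ P.support}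
  set C := G.reachableAvoiding S v1
  obtain ⟨p, hp, q, hq, hpq, hpC, hqC⟩ :=
    h2.exists_two_adj_reachableAvoiding (S := S) hv1P P.start_mem_support P.end_mem_support h23
  obtain ⟨a, b, hab, Q, R, hPQR, hCQ, hCR⟩ :=
    P.exists_eq_append_cons_of_mem_support (T := {x | ∃ c ∈ C, G.Adj c x}) hp hq hpC hqC hpq
  have hC : (G.induce C).Connected := connected_induce_reachableAvoiding hv1P
  have hCP : ∀ z ∈ P.support, z ∉ C := fun z hz hzC => notMem_of_mem_reachableAvoiding hzC hz
  exact ⟨_, hP.isCompleteMinorWitness_of_eq_append_cons hPQR hC hCP hCQ hCR,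
    self_mem_reachableAvoiding hv1P, Q.start_mem_support, R.end_mem_support⟩

/-- In a 2-connected graph with at least 3 vertices, any three distinct vertices
carry a `K_3` minor whose three branch sets contain them respectively. -/
theorem k3_minor_on_three_vertices {V : Type*} [Fintype V] (G : SimpleGraph V)
    (h2 : TwoConnected G) (hcard : 3 ≤ Fintype.card V)
    (v1 v2 v3 : V) (h12 : v1 ≠ v2) (h13 : v1 ≠ v3) (h23 : v2 ≠ v3) :
    ∃ B : Fin 3 → Set V, IsCompleteMinorWitness G 3 B ∧
      v1 ∈ B 0 ∧ v2 ∈ B 1 ∧ v3 ∈ B 2 :=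
  k3_minor_on_three_vertices_general G h2 v1 v2 v3 h12 h13 h23
end

section
/- Let G be a 2-connected graph with a 2-element cut set {v1, v2}, and let C_1, ..., C_x be the connected components of G \ {v1, v2}. If G contains a K_4 minor, then for some i, the subgraph induced on C_i ∪ {v1, v2} together with the edge v1v2 (if absent, after contracting another component to create it) contains a K_4 minor; equivalently, some G[C_i ∪ {v1,v2}] plus the edge v1v2 has a K_4 minor. -/
open SimpleGraph

/-!
Four pairwise disjoint branch sets cannot all meet `X = {v1, v2}`, so one of them lies in a
component `C` of `G - X`. Any other branch set either meets `X`, or avoids `X` and then, being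
adjacent to the first one, lies in `C` too. Intersecting every branch set with `C ∪ X` gives a `K_4`
model in `G[C ∪ X] + v1v2`: no edge leaves `C` except into `X`, so a walk inside a branch set from a
vertex of `C ∪ X` towards `X` stays in `C ∪ X`; the new edge joins the `X`-vertices of one branch
set, and joins two branch sets that both meet `X`.
-/

namespace SimpleGraph

variable {V : Type*} {G H : SimpleGraph V} {A C X : Set V}

def SeparatedBy (G : SimpleGraph V) (C X : Set V) : Prop :=
  ∀ ⦃x y⦄, G.Adj x y → x ∈ C → y ∈ C ∪ X

lemma separatedBy_connectedComponent_supp (K : (G.induce Xᶜ).ConnectedComponent) :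
    G.SeparatedBy (Subtype.val '' K.supp) X := by
  rintro _ y hxy ⟨x, hx, rfl⟩
  by_cases hy : y ∈ X
  · exact Or.inr hy
  · exact Or.inl ⟨⟨y, hy⟩, K.mem_supp_of_adj_mem_supp hx hxy, rfl⟩

lemma exists_walk_of_connected_induce (hA : (G.induce A).Connected) {u v : V} (hu : u ∈ A)
    (hv : v ∈ A) : ∃ p : G.Walk u v, ∀ z ∈ p.support, z ∈ A := by
  obtain ⟨p⟩ := hA.preconnected ⟨u, hu⟩ ⟨v, hv⟩
  refine ⟨p.map (Embedding.induce A).toHom, fun z hz => ?_⟩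
  obtain ⟨z, -, rfl⟩ := List.mem_map.mp ((Walk.support_map _ _) ▸ hz)
  exact z.2

namespace SeparatedBy

lemma mem_of_walk (hC : G.SeparatedBy C X) :
    ∀ {u v : V} (p : G.Walk u v), u ∈ C → (∀ z ∈ p.support, z ∉ X) → v ∈ C
  | _, _, .nil, hu, _ => hu
  | _, _, .cons h p, hu, hp =>
    mem_of_walk hC p ((hC h hu).resolve_right (hp _ (by simp))) fun z hz => hp z (by simp [hz])

lemma subset_of_connected (hC : G.SeparatedBy C X) (hA : (G.induce A).Connected)
    (hAX : Disjoint A X) (hAC : (A ∩ C).Nonempty) : A ⊆ C := by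
  obtain ⟨a, haA, haC⟩ := hAC
  intro x hx
  obtain ⟨p, hp⟩ := exists_walk_of_connected_induce hA haA hx
  exact hC.mem_of_walk p haC fun z hz => Set.disjoint_left.mp hAX (hp z hz)

lemma exists_walk_to_separator (hC : G.SeparatedBy C X) :
    ∀ {u v : V} (p : G.Walk u v), (∀ z ∈ p.support, z ∈ A) → u ∈ C ∪ X → v ∈ X →
      ∃ t ∈ X, ∃ q : G.Walk u t, ∀ z ∈ q.support, z ∈ A ∩ (C ∪ X)
  | u, _, .nil, hp, hu, hv => ⟨u, hv, .nil, by simpa using ⟨hp u (by simp), hu⟩⟩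
  | u, _, .cons h p, hp, hu, hv => by
    by_cases huX : u ∈ X
    · exact ⟨u, huX, .nil, by simpa using ⟨hp u (by simp), hu⟩⟩
    obtain ⟨t, htX, q, hq⟩ := exists_walk_to_separator hC p (fun z hz => hp z (by simp [hz]))
      (hC h (hu.resolve_right huX)) hv
    refine ⟨t, htX, .cons h q, fun z hz => ?_⟩
    rcases List.mem_cons.mp (Walk.support_cons h q ▸ hz) with rfl | hz
    · exact ⟨hp z (by simp), hu⟩
    · exact hq z hz

lemma connected_induce_inter (hC : G.SeparatedBy C X) (hGH : G ≤ H) (hX : H.IsClique X)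
    (hA : (G.induce A).Connected) (hAX : (A ∩ X).Nonempty) :
    (H.induce (A ∩ (C ∪ X))).Connected := by
  obtain ⟨t₀, ht₀A, ht₀X⟩ := hAX
  have ht₀ : t₀ ∈ A ∩ (C ∪ X) := ⟨ht₀A, Or.inr ht₀X⟩
  rw [connected_iff_exists_forall_reachable]
  refine ⟨⟨t₀, ht₀⟩, fun ⟨u, huA, huCX⟩ => ?_⟩
  obtain ⟨p, hp⟩ := exists_walk_of_connected_induce hA huA ht₀A
  obtain ⟨t, htX, q, hq⟩ := hC.exists_walk_to_separator p hp huCX ht₀X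
  have hut : (H.induce (A ∩ (C ∪ X))).Reachable ⟨u, huA, huCX⟩ ⟨t, hq t q.end_mem_support⟩ :=
    ((q.mapLe hGH).induce _ (by simpa using hq)).reachable
  have htt₀ : (H.induce (A ∩ (C ∪ X))).Reachable ⟨t, hq t q.end_mem_support⟩ ⟨t₀, ht₀⟩ := by
    obtain rfl | hne := eq_or_ne t t₀
    · rfl
    · exact Adj.reachable (hX htX ht₀X hne)
  exact (hut.trans htt₀).symm

end SeparatedBy

lemma isClique_pair_sup_fromEdgeSet (G : SimpleGraph V) (a b : V) :
    (G ⊔ fromEdgeSet {s(a, b)}).IsClique {a, b} :=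
  isClique_pair.mpr fun hab => Or.inr (by simp [hab])

end SimpleGraph

lemma exists_disjoint_pair_of_pairwise_disjoint {ι V : Type*} [Fintype ι] {B : ι → Set V}
    (hB : Pairwise fun i j => Disjoint (B i) (B j)) (hι : 2 < Fintype.card ι) (a b : V) :
    ∃ i, Disjoint (B i) {a, b} := by
  by_contra! h
  have hmeet : ∀ i, a ∈ B i ∨ b ∈ B i := fun i => by
    obtain ⟨x, hx, rfl | rfl⟩ := Set.not_disjoint_iff.mp (h i)
    exacts [Or.inl hx, Or.inr hx]
  obtain ⟨i, j, hij, hiff⟩ :=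
    Fintype.exists_ne_map_eq_of_card_lt (fun i => a ∈ B i) (by simpa using hι)
  by_cases ha : a ∈ B i
  · exact Set.disjoint_left.mp (hB hij) ha (hiff ▸ ha)
  · exact Set.disjoint_left.mp (hB hij) ((hmeet i).resolve_left ha)
      ((hmeet j).resolve_left (hiff ▸ ha))

namespace IsCompleteMinorWitness

variable {V : Type*} {G H : SimpleGraph V} {n : ℕ} {B : Fin n → Set V} {C X : Set V}

lemma subset_or_inter_nonempty (hB : IsCompleteMinorWitness G n B) (hC : G.SeparatedBy C X)
    {i₀ : Fin n} (hi₀ : B i₀ ⊆ C) (i : Fin n) : B i ⊆ C ∨ (B i ∩ X).Nonempty := by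
  rw [or_iff_not_imp_right, Set.not_nonempty_iff_eq_empty, ← Set.disjoint_iff_inter_eq_empty]
  intro hiX
  obtain rfl | hne := eq_or_ne i i₀
  · exact hi₀
  obtain ⟨u, hu, w, hw, huw⟩ := hB.2.2.2 i₀ i hne.symm
  exact hC.subset_of_connected (hB.2.1 i) hiX
    ⟨w, hw, (hC huw (hi₀ hu)).resolve_right (Set.disjoint_left.mp hiX hw)⟩

lemma inter_of_separatedBy (hB : IsCompleteMinorWitness G n B) (hC : G.SeparatedBy C X)
    (hGH : G ≤ H) (hX : H.IsClique X) (hcover : ∀ i, B i ⊆ C ∨ (B i ∩ X).Nonempty) :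
    IsCompleteMinorWitness H n fun i => B i ∩ (C ∪ X) := by
  obtain ⟨hne, hconn, hdisj, hadj⟩ := hB
  have hinter : ∀ i, B i ⊆ C → B i ∩ (C ∪ X) = B i := fun i h =>
    Set.inter_eq_left.mpr (h.trans Set.subset_union_left)
  refine ⟨fun i => ?_, fun i => ?_,
    fun i j hij => (hdisj i j hij).mono Set.inter_subset_left Set.inter_subset_left,
    fun i j hij => ?_⟩
  · rcases hcover i with h | ⟨t, htB, htX⟩
    · dsimp only
      rw [hinter i h]
      exact hne i
    · exact ⟨t, htB, Or.inr htX⟩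
  · rcases hcover i with h | h
    · dsimp only
      rw [hinter i h]
      exact (hconn i).mono (G' := H.induce (B i)) fun _ _ huv => hGH huv
    · exact hC.connected_induce_inter hGH hX (hconn i) h
  · obtain ⟨u, hu, w, hw, huw⟩ := hadj i j hij
    rcases hcover i with hi | ⟨t, htB, htX⟩
    · exact ⟨u, ⟨hu, Or.inl (hi hu)⟩, w, ⟨hw, hC huw (hi hu)⟩, hGH huw⟩
    rcases hcover j with hj | ⟨t', ht'B, ht'X⟩
    · exact ⟨u, ⟨hu, hC huw.symm (hj hw)⟩, w, ⟨hw, Or.inl (hj hw)⟩, hGH huw⟩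
    refine ⟨t, ⟨htB, Or.inr htX⟩, t', ⟨ht'B, Or.inr ht'X⟩, hX htX ht'X ?_⟩
    rintro rfl
    exact Set.disjoint_left.mp (hdisj i j hij) htB ht'B

lemma induce (hB : IsCompleteMinorWitness H n B) {U : Set V} (hU : ∀ i, B i ⊆ U) :
    IsCompleteMinorWitness (H.induce U) n fun i => Subtype.val ⁻¹' B i := by
  obtain ⟨hne, hconn, hdisj, hadj⟩ := hB
  refine ⟨fun i => ?_, fun i => ?_, fun i j hij => (hdisj i j hij).preimage _, fun i j hij => ?_⟩
  · obtain ⟨x, hx⟩ := hne i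
    exact ⟨⟨x, hU i hx⟩, hx⟩
  · let f : H.induce (B i) →g (H.induce U).induce (Subtype.val ⁻¹' B i) :=
      { toFun := fun x => ⟨⟨x, hU i x.2⟩, x.2⟩, map_rel' := id }
    exact (hconn i).map f fun ⟨⟨x, _⟩, hx⟩ => ⟨⟨x, hx⟩, rfl⟩
  · obtain ⟨u, hu, w, hw, huw⟩ := hadj i j hij
    exact ⟨⟨u, hU i hu⟩, hu, ⟨w, hU j hw⟩, hw, huw⟩

end IsCompleteMinorWitness

theorem k4_minor_in_some_component_general {V : Type*} (G : SimpleGraph V)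
    (v1 v2 : V)
    (h4 : HasCompleteMinor G 4) :
    ∃ K : (G.induce ({v1, v2}ᶜ : Set V)).ConnectedComponent,
      HasCompleteMinor
        ((G ⊔ SimpleGraph.fromEdgeSet {s(v1, v2)}).induce
          ((Subtype.val '' K.supp) ∪ {v1, v2})) 4 := by
  obtain ⟨B, hB⟩ := h4
  obtain ⟨i₀, hi₀⟩ := exists_disjoint_pair_of_pairwise_disjoint hB.2.2.1 (by simp) v1 v2
  obtain ⟨a, ha⟩ := hB.1 i₀
  let K := (G.induce {v1, v2}ᶜ).connectedComponentMk ⟨a, Set.disjoint_left.mp hi₀ ha⟩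
  have hC := separatedBy_connectedComponent_supp K
  have hi₀C : B i₀ ⊆ Subtype.val '' K.supp :=
    hC.subset_of_connected (hB.2.1 i₀) hi₀ ⟨a, ha, _, rfl, rfl⟩
  have hB' := hB.inter_of_separatedBy hC le_sup_left (isClique_pair_sup_fromEdgeSet G v1 v2)
    (hB.subset_or_inter_nonempty hC hi₀C)
  exact ⟨K, _, hB'.induce fun i => Set.inter_subset_right⟩

/-- In a 2-connected graph with a 2-element cut set `{v1, v2}`, if `G` has a `K_4`
minor then for some connected component `C` of `G - {v1, v2}`, the induced subgraph
on `C ∪ {v1, v2}` together with the edge `v1v2` has a `K_4` minor. -/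
theorem k4_minor_in_some_component {V : Type*} (G : SimpleGraph V)
    (h2 : TwoConnected G) (v1 v2 : V) (hne : v1 ≠ v2)
    (hcut : ¬ (G.induce ({v1, v2}ᶜ : Set V)).Connected)
    (h4 : HasCompleteMinor G 4) :
    ∃ K : (G.induce ({v1, v2}ᶜ : Set V)).ConnectedComponent,
      HasCompleteMinor
        ((G ⊔ SimpleGraph.fromEdgeSet {s(v1, v2)}).induce
          ((Subtype.val '' K.supp) ∪ {v1, v2})) 4 :=
  k4_minor_in_some_component_general G v1 v2 h4
end

section
/- Let G be a graph and v a vertex such that G contains two cycles C1 and C2 whose intersection is a path P with at least one internal vertex, and such that v has a neighbor in C1 \ P, a neighbor in C2 \ P, and a neighbor in the interior of P. Then G contains a K_{3,3} minor. -/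
open SimpleGraph

/-
Cut each path `P i` at the neighbour `w i` of `v`. The prefixes (the parts before `w i`) all
start at `a`, so their union is connected, and likewise the suffixes all end at `b`;
internal disjointness makes these two unions disjoint and keeps every `w i` out of them.
Then `{v}`, the prefixes and the suffixes are three branch sets, each adjacent to every `w i`
(through `v`, the predecessor and the successor of `w i` on `P i`), and the singletons
`{w i}` form the other side. The argument yields `K_{3,n}` for any number `n ≥ 1` of paths.
-/

namespace SimpleGraph

variable {V : Type*} {G : SimpleGraph V}

lemma Walk.exists_support_eq_append_cons {a b w : V} (p : G.Walk a b) (hw : w ∈ p.support)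
    (ha : w ≠ a) (hb : w ≠ b) :
    ∃ (u t : V) (q : G.Walk a u) (r : G.Walk t b),
      G.Adj u w ∧ G.Adj w t ∧ p.support = q.support ++ w :: r.support := by
  obtain ⟨q', r', rfl⟩ := Walk.mem_support_iff_exists_append.mp hw
  obtain ⟨_, h, q'', rfl⟩ := Walk.exists_eq_cons_of_ne ha.symm q'
  obtain ⟨u, q, huw, hq⟩ := Walk.exists_cons_eq_concat h q''
  obtain ⟨t, hwt, r, rfl⟩ := Walk.exists_eq_cons_of_ne hb r'
  exact ⟨u, t, q, r, huw, hwt, by simp [hq, Walk.support_append, Walk.support_concat]⟩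

lemma induce_iUnion_connected_of_forall_mem {ι : Type*} [Nonempty ι] {s : ι → Set V} {c : V}
    (hc : ∀ i, c ∈ s i) (hs : ∀ i, (G.induce (s i)).Connected) :
    (G.induce (⋃ i, s i)).Connected := by
  rw [← Set.sUnion_range]
  exact induce_sUnion_connected_of_pairwise_not_disjoint (Set.range_nonempty s)
    (by rintro _ _ ⟨i, rfl⟩ ⟨j, rfl⟩; exact ⟨c, hc i, hc j⟩) (by rintro _ ⟨i, rfl⟩; exact hs i)

lemma hasBipartiteMinor_of_forall_exists_adj {m n : ℕ} (A : Fin m → Set V) (w : Fin n → V)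
    (hA : ∀ i, (G.induce (A i)).Connected) (hAdisj : ∀ i j, i ≠ j → Disjoint (A i) (A j))
    (hw : Function.Injective w) (hwA : ∀ i j, w j ∉ A i)
    (hadj : ∀ i j, ∃ x ∈ A i, G.Adj x (w j)) :
    HasBipartiteMinor G m n := by
  refine ⟨A, fun j => {w j}, fun i => ?_, fun j => ⟨w j, rfl⟩, hA,
    fun j => Connected.of_subsingleton, hAdisj,
    fun i j hij => Set.disjoint_singleton.2 (hw.ne hij),
    fun i j => Set.disjoint_singleton_right.2 (hwA i j), fun i j => ?_⟩
  · obtain ⟨x⟩ := (hA i).nonempty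
    exact ⟨x, x.2⟩
  · obtain ⟨x, hx, hxw⟩ := hadj i j
    exact ⟨x, hx, w j, rfl, hxw⟩

def PairwiseInternallyDisjoint {ι : Type*} {a b : V} (P : ι → G.Walk a b) : Prop :=
  ∀ i j, i ≠ j → ∀ x ∈ (P i).support, x ∈ (P j).support → x = a ∨ x = b

namespace PairwiseInternallyDisjoint

variable {ι : Type*} {a b : V} {P : ι → G.Walk a b}

lemma eq_of_mem_support (hdisj : PairwiseInternallyDisjoint P) {i j : ι} {x : V}
    (hxa : x ≠ a) (hxb : x ≠ b) (hi : x ∈ (P i).support) (hj : x ∈ (P j).support) : i = j := by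
  by_contra hij
  rcases hdisj i j hij x hi hj with h | h
  exacts [hxa h, hxb h]

variable {u w t : ι → V} {q : ∀ i, G.Walk a (u i)} {r : ∀ i, G.Walk (t i) b}

lemma disjoint_iUnion_prefixes_suffixes (hdisj : PairwiseInternallyDisjoint P)
    (hP : ∀ i, (P i).IsPath)
    (hsupp : ∀ i, (P i).support = (q i).support ++ w i :: (r i).support) :
    Disjoint (⋃ i, {x | x ∈ (q i).support}) (⋃ i, {x | x ∈ (r i).support}) := by
  have hqr k {y} (hq : y ∈ (q k).support) (hr : y ∈ (r k).support) : False :=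
    List.disjoint_of_nodup_append (hsupp k ▸ (hP k).support_nodup) hq (.tail _ hr)
  simp only [Set.disjoint_left, Set.mem_iUnion, Set.mem_ofPred_eq]
  rintro x ⟨i, hi⟩ ⟨j, hj⟩
  rcases eq_or_ne i j with rfl | hij
  · exact hqr i hi hj
  rcases hdisj i j hij x (by simp [hsupp, hi]) (by simp [hsupp, hj]) with rfl | rfl
  exacts [hqr j (q j).start_mem_support hj, hqr i hi (r i).end_mem_support]

lemma notMem_iUnion_prefixes_suffixes (hdisj : PairwiseInternallyDisjoint P)
    (hP : ∀ i, (P i).IsPath)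
    (hsupp : ∀ i, (P i).support = (q i).support ++ w i :: (r i).support)
    (j : ι) (hwa : w j ≠ a) (hwb : w j ≠ b) :
    w j ∉ (⋃ i, {x | x ∈ (q i).support}) ∪ (⋃ i, {x | x ∈ (r i).support}) := by
  have hwj : w j ∉ (q j).support ++ (r j).support :=
    (List.nodup_cons.1 (List.nodup_middle.1 (hsupp j ▸ (hP j).support_nodup))).1
  have hj : w j ∈ (P j).support := by simp [hsupp]
  simp only [Set.mem_union, Set.mem_iUnion, Set.mem_ofPred_eq]
  rintro (⟨i, h⟩ | ⟨i, h⟩)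
  all_goals
    obtain rfl := hdisj.eq_of_mem_support (i := i) hwa hwb (by simp [hsupp, h]) hj
    simp [h] at hwj

lemma hasBipartiteMinor_three_of_adj {n : ℕ} [NeZero n] {P : Fin n → G.Walk a b}
    (hdisj : PairwiseInternallyDisjoint P) (hP : ∀ i, (P i).IsPath) (v : V)
    (hv : ∀ i, v ∉ (P i).support) (w : Fin n → V) (hvw : ∀ i, G.Adj v (w i))
    (hw : ∀ i, w i ∈ (P i).support ∧ w i ≠ a ∧ w i ≠ b) :
    HasBipartiteMinor G 3 n := by
  choose u t q r huw hwt hsupp using fun i =>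
    (P i).exists_support_eq_append_cons (hw i).1 (hw i).2.1 (hw i).2.2
  set Sa : Set V := ⋃ i, {x | x ∈ (q i).support}
  set Sb : Set V := ⋃ i, {x | x ∈ (r i).support}
  have hSab : Disjoint Sa Sb := hdisj.disjoint_iUnion_prefixes_suffixes hP hsupp
  have hw_Sab j : w j ∉ Sa ∪ Sb :=
    hdisj.notMem_iUnion_prefixes_suffixes hP hsupp j (hw j).2.1 (hw j).2.2
  have hv_Sa : Disjoint {v} Sa := by
    simp only [Sa, Set.disjoint_singleton_left, Set.mem_iUnion, Set.mem_ofPred_eq]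
    exact fun ⟨i, h⟩ => hv i (by simp [hsupp, h])
  have hv_Sb : Disjoint {v} Sb := by
    simp only [Sb, Set.disjoint_singleton_left, Set.mem_iUnion, Set.mem_ofPred_eq]
    exact fun ⟨i, h⟩ => hv i (by simp [hsupp, h])
  refine hasBipartiteMinor_of_forall_exists_adj ![{v}, Sa, Sb] w ?_ ?_ ?_ ?_ ?_
  · intro i
    fin_cases i
    · exact (Connected.of_subsingleton : (G.induce {v}).Connected)
    · exact induce_iUnion_connected_of_forall_mem (fun i => (q i).start_mem_support)
        fun i => (q i).connected_induce_support
    · exact induce_iUnion_connected_of_forall_mem (fun i => (r i).end_mem_support)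
        fun i => (r i).connected_induce_support
  · intro i j hij
    fin_cases i <;> fin_cases j
    all_goals first
      | exact absurd rfl hij
      | exact hv_Sa | exact hv_Sb | exact hSab
      | exact hv_Sa.symm | exact hv_Sb.symm | exact hSab.symm
  · intro i j h
    exact hdisj.eq_of_mem_support (hw j).2.1 (hw j).2.2 (h ▸ (hw i).1) (hw j).1
  · intro i j
    fin_cases i
    exacts [fun h => hv j (h ▸ (hw j).1), fun h => hw_Sab j (.inl h), fun h => hw_Sab j (.inr h)]
  · intro i j
    fin_cases i
    exacts [⟨v, rfl, hvw j⟩, ⟨u j, Set.mem_iUnion.2 ⟨j, (q j).end_mem_support⟩, huw j⟩,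
      ⟨t j, Set.mem_iUnion.2 ⟨j, (r j).start_mem_support⟩, (hwt j).symm⟩]

end PairwiseInternallyDisjoint

end SimpleGraph

theorem k33_minor_of_twin_cycle_general {V : Type*} (G : SimpleGraph V)
    (a b : V)
    (P1 P2 P3 : G.Walk a b)
    (hp1 : P1.IsPath) (hp2 : P2.IsPath) (hp3 : P3.IsPath)
    (hd12 : ∀ x, x ∈ P1.support → x ∈ P2.support → x = a ∨ x = b)
    (hd13 : ∀ x, x ∈ P1.support → x ∈ P3.support → x = a ∨ x = b)
    (hd23 : ∀ x, x ∈ P2.support → x ∈ P3.support → x = a ∨ x = b)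
    (v : V) (hv1 : v ∉ P1.support) (hv2 : v ∉ P2.support) (hv3 : v ∉ P3.support)
    (w1 w2 w3 : V)
    (ha1 : G.Adj v w1) (ha2 : G.Adj v w2) (ha3 : G.Adj v w3)
    (hw1 : w1 ∈ P1.support ∧ w1 ≠ a ∧ w1 ≠ b)
    (hw2 : w2 ∈ P2.support ∧ w2 ≠ a ∧ w2 ≠ b)
    (hw3 : w3 ∈ P3.support ∧ w3 ≠ a ∧ w3 ≠ b) :
    HasBipartiteMinor G 3 3 := by
  have hdisj : PairwiseInternallyDisjoint ![P1, P2, P3] := by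
    intro i j hij x hi hj
    fin_cases i <;> fin_cases j
    all_goals first
      | exact absurd rfl hij
      | exact hd12 x hi hj | exact hd13 x hi hj | exact hd23 x hi hj
      | exact hd12 x hj hi | exact hd13 x hj hi | exact hd23 x hj hi
  refine hdisj.hasBipartiteMinor_three_of_adj ?_ v ?_ ![w1, w2, w3] ?_ ?_ <;> intro i <;>
    fin_cases i <;> assumption

/-- A twin-cycle configuration: three internally disjoint `a`–`b` paths (two cycles
sharing the path `P2`, which has an internal vertex), together with a vertex `v`
having a neighbor in the interior of each path, forces a `K_{3,3}` minor. -/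
theorem k33_minor_of_twin_cycle {V : Type*} (G : SimpleGraph V)
    (a b : V) (hab : a ≠ b)
    (P1 P2 P3 : G.Walk a b)
    (hp1 : P1.IsPath) (hp2 : P2.IsPath) (hp3 : P3.IsPath)
    (hd12 : ∀ x, x ∈ P1.support → x ∈ P2.support → x = a ∨ x = b)
    (hd13 : ∀ x, x ∈ P1.support → x ∈ P3.support → x = a ∨ x = b)
    (hd23 : ∀ x, x ∈ P2.support → x ∈ P3.support → x = a ∨ x = b)
    (v : V) (hv1 : v ∉ P1.support) (hv2 : v ∉ P2.support) (hv3 : v ∉ P3.support)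
    (w1 w2 w3 : V)
    (ha1 : G.Adj v w1) (ha2 : G.Adj v w2) (ha3 : G.Adj v w3)
    (hw1 : w1 ∈ P1.support ∧ w1 ≠ a ∧ w1 ≠ b)
    (hw2 : w2 ∈ P2.support ∧ w2 ≠ a ∧ w2 ≠ b)
    (hw3 : w3 ∈ P3.support ∧ w3 ≠ a ∧ w3 ≠ b) :
    HasBipartiteMinor G 3 3 :=
  k33_minor_of_twin_cycle_general G a b P1 P2 P3 hp1 hp2 hp3 hd12 hd13 hd23 v hv1 hv2 hv3 w1 w2 w3
    ha1 ha2 ha3 hw1 hw2 hw3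
end
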